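/- arXiv:2107.11926 — 4 statements merged into one kernel-verified Lean document; each statement's English description precedes it below -/
import Mathlib

section
/- Let R be an order in a central simple algebra S. Then R is a maximal order if and only if for every nonzero z ∈ Z(R) and every ring R' with R ⊆ R' ⊆ (1/z)R := { x z^{-1} | x ∈ R }, one has R' = R. -/
/-- `R` is an order in `S`: every `x ∈ S` can be written as `a b⁻¹` and as
`c⁻¹ d` with `a, b, c, d ∈ R` (the inverses taken in `S`). -/
def IsOrderIn {S : Type*} [Ring S] (R : Subring S) : Prop :=
  ∀ x : S,
    (∃ a b bi : S, a ∈ R ∧ b ∈ R ∧ b * bi = 1 ∧ bi * b = 1 ∧ x = a * bi) ∧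
    (∃ c d ci : S, c ∈ R ∧ d ∈ R ∧ c * ci = 1 ∧ ci * c = 1 ∧ x = ci * d)

/-- Two orders `R, R'` of `S` are equivalent if `a R b ⊆ R'` and `a' R' b' ⊆ R`
for some units `a, b, a', b'` of `S`. -/
def OrderEquivIn {S : Type*} [Ring S] (R R' : Subring S) : Prop :=
  (∃ a b : Sˣ, ∀ r ∈ R, (a : S) * r * (b : S) ∈ R') ∧
  (∃ a b : Sˣ, ∀ r ∈ R', (a : S) * r * (b : S) ∈ R)

/-- A maximal order is an order which is maximal, with respect to inclusion,
in its equivalence class of orders. -/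
def IsMaximalOrderIn {S : Type*} [Ring S] (R : Subring S) : Prop :=
  IsOrderIn R ∧
  ∀ R' : Subring S, IsOrderIn R' → OrderEquivIn R R' → R ≤ R' → R' = R

/-!
If `R` is maximal and `0 ≠ z ∈ R` commutes with `R`, then `z` is central in `S`, hence a nonzero
scalar and a unit; any ring `R ⊆ R' ⊆ (1/z)R` is then an order equivalent to `R`, so `R' = R`.
Conversely, let `R ⊆ R'` be an equivalent order, so `a R' b ⊆ R` for units `a, b`. If we find
nonzero scalars `z₁, z₂ ∈ R` with `z₁ a⁻¹, z₂ b⁻¹ ∈ R`, then `R' z₁ z₂ ⊆ R` and the hypothesis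
gives `R' = R`.

Such scalar denominators exist for every `s ∈ S`. By the Jacobson density theorem for the simple
`S ⊗ Sᵐᵒᵖ`-module `S`, every `Q`-linear endomorphism of `S` is a sum of maps `x ↦ σ x τ`. Common
denominators in `R` (the Ore condition) then give invertible `u, v` such that all `E i j * u`,
`L_s * E i j * u` and `v * E k l` map `R` into `R`, where `E i j` are the matrix units for a basis
of `S`. Choosing `j, k` with `λ = (u v) j k ≠ 0`, the identity `λ • X = ∑ i, X E i j u v E k i`
shows that `λ • 1` and `λ • L_s` map `R` into `R`; evaluating at `1` gives `λ ∈ R` and `λ s ∈ R`.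
-/

namespace IsOrderIn

variable {S : Type*} [Ring S] {R : Subring S}

theorem exists_mul_inv (hR : IsOrderIn R) (x : S) :
    ∃ a ∈ R, ∃ b : Sˣ, (b : S) ∈ R ∧ x = a * ↑b⁻¹ := by
  obtain ⟨⟨a, b, bi, ha, hb, h₁, h₂, rfl⟩, -⟩ := hR x
  exact ⟨a, ha, ⟨b, bi, h₁, h₂⟩, hb, rfl⟩

theorem exists_inv_mul (hR : IsOrderIn R) (x : S) :
    ∃ c : Sˣ, (c : S) ∈ R ∧ ∃ d ∈ R, x = ↑c⁻¹ * d := by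
  obtain ⟨-, ⟨c, d, ci, hc, hd, h₁, h₂, rfl⟩⟩ := hR x
  exact ⟨⟨c, ci, h₁, h₂⟩, hc, d, hd, rfl⟩

theorem mono (hR : IsOrderIn R) {R' : Subring S} (h : R ≤ R') : IsOrderIn R' := fun x =>
  let ⟨⟨a, b, bi, ha, hb, hab⟩, ⟨c, d, ci, hc, hd, hcd⟩⟩ := hR x
  ⟨⟨a, b, bi, h ha, h hb, hab⟩, ⟨c, d, ci, h hc, h hd, hcd⟩⟩

theorem mem_center_of_commute (hR : IsOrderIn R) {z : S} (hz : ∀ r ∈ R, z * r = r * z) :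
    z ∈ Subring.center S := by
  refine Subring.mem_center_iff.mpr fun x => ?_
  obtain ⟨c, hc, d, hd, rfl⟩ := hR.exists_inv_mul x
  have hzc : z * ↑c⁻¹ = ↑c⁻¹ * z := by
    rw [Units.mul_inv_eq_iff_eq_mul, mul_assoc, hz c hc, Units.inv_mul_cancel_left]
  rw [mul_assoc, ← hz d hd, ← mul_assoc, ← hzc, mul_assoc]

theorem exists_common_right_denom (hR : IsOrderIn R) (s : Finset S) :
    ∃ b : Sˣ, (b : S) ∈ R ∧ ∀ x ∈ s, x * b ∈ R := by
  classical
  induction s using Finset.induction_on with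
  | empty => exact ⟨1, R.one_mem, by simp⟩
  | insert y s _ ih =>
    obtain ⟨b, hb, hs⟩ := ih
    obtain ⟨a₁, ha₁, b₁, -, rfl⟩ := hR.exists_mul_inv y
    obtain ⟨a', ha', b', hb', hore⟩ := hR.exists_mul_inv (↑b₁⁻¹ * b)
    have hore' : ↑b₁⁻¹ * ↑b * ↑b' = a' := by rw [hore, Units.inv_mul_cancel_right]
    refine ⟨b * b', R.mul_mem hb hb', ?_⟩
    simp only [Finset.mem_insert, forall_eq_or_imp, Units.val_mul]
    refine ⟨?_, fun x hx => ?_⟩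
    · rw [mul_assoc, ← mul_assoc _ b.val, hore']
      exact R.mul_mem ha₁ ha'
    · rw [← mul_assoc]
      exact R.mul_mem (hs x hx) hb'

theorem exists_common_left_denom (hR : IsOrderIn R) (s : Finset S) :
    ∃ c : Sˣ, (c : S) ∈ R ∧ ∀ x ∈ s, c * x ∈ R := by
  classical
  induction s using Finset.induction_on with
  | empty => exact ⟨1, R.one_mem, by simp⟩
  | insert y s _ ih =>
    obtain ⟨c, hc, hs⟩ := ih
    obtain ⟨c₁, -, d₁, hd₁, rfl⟩ := hR.exists_inv_mul y
    obtain ⟨c', hc', d', hd', hore⟩ := hR.exists_inv_mul (c * ↑c₁⁻¹)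
    have hore' : ↑c' * ↑c * ↑c₁⁻¹ = d' := by
      rw [mul_assoc, hore, Units.mul_inv_cancel_left]
    refine ⟨c' * c, R.mul_mem hc' hc, ?_⟩
    simp only [Finset.mem_insert, forall_eq_or_imp, Units.val_mul]
    refine ⟨?_, fun x hx => ?_⟩
    · rw [← mul_assoc, hore']
      exact R.mul_mem hd' hd₁
    · rw [mul_assoc]
      exact R.mul_mem hc' (hs x hx)

end IsOrderIn

section Bimodule

open TensorProduct MulOpposite

variable {Q S : Type*} [Field Q] [Ring S] [Algebra Q S]

theorem LinearMap.mulLeftRight_mul (a b c d : S) :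
    mulLeftRight Q (a, b) * mulLeftRight Q (c, d) = mulLeftRight Q (a * c, d * b) := by
  ext x
  simp only [Module.End.mul_apply, mulLeftRight_apply, mul_assoc]

theorem LinearMap.isUnit_mulLeftRight (b c : Sˣ) : IsUnit (mulLeftRight Q ((b : S), (c : S))) :=
  ⟨⟨mulLeftRight Q ((b : S), (c : S)), mulLeftRight Q (↑b⁻¹, ↑c⁻¹),
    by ext; simp [mul_assoc], by ext; simp [mul_assoc]⟩, rfl⟩

theorem AlgHom.mulLeftRight_tmul (a : S) (b : Sᵐᵒᵖ) :
    AlgHom.mulLeftRight Q S (a ⊗ₜ b) = LinearMap.mulLeftRight Q (a, b.unop) := by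
  ext x
  simp

variable (Q) in
def Subring.endStabilizer (R : Subring S) : Subring (Module.End Q S) where
  carrier := {φ | ∀ x ∈ R, φ x ∈ R}
  one_mem' _ hx := hx
  mul_mem' hφ hψ _ hx := hφ _ (hψ _ hx)
  zero_mem' _ _ := R.zero_mem
  add_mem' hφ hψ _ hx := R.add_mem (hφ _ hx) (hψ _ hx)
  neg_mem' hφ _ hx := R.neg_mem (hφ _ hx)

theorem Subring.mulLeftRight_mem_endStabilizer {R : Subring S} {a b : S} (ha : a ∈ R)
    (hb : b ∈ R) :
    LinearMap.mulLeftRight Q (a, b) ∈ R.endStabilizer Q :=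
  fun _ hx => R.mul_mem (R.mul_mem ha hx) hb

attribute [local instance] instModuleTensorProductMop

theorem TensorProduct.tmul_smul_eq_mul_mul (a : S) (b : Sᵐᵒᵖ) (x : S) :
    (a ⊗ₜ[Q] b) • x = a * x * b.unop :=
  AlgHom.mulLeftRight_apply Q S a b x

def Submodule.toTwoSidedIdeal (N : Submodule (S ⊗[Q] Sᵐᵒᵖ) S) : TwoSidedIdeal S :=
  .mk' N N.zero_mem N.add_mem N.neg_mem
    (fun {x _} hy => by
      simpa [TensorProduct.tmul_smul_eq_mul_mul] using N.smul_mem (x ⊗ₜ op 1) hy)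
    (fun {_ y} hx => by
      simpa [TensorProduct.tmul_smul_eq_mul_mul] using N.smul_mem (1 ⊗ₜ op y) hx)

theorem isSimpleModule_tensorProduct_mop [IsSimpleRing S] :
    IsSimpleModule (S ⊗[Q] Sᵐᵒᵖ) S := by
  refine (isSimpleModule_iff _ _).mpr ⟨fun N => ?_⟩
  have hmem (x : S) : x ∈ N.toTwoSidedIdeal ↔ x ∈ N := TwoSidedIdeal.mem_mk' ..
  refine (IsSimpleOrder.eq_bot_or_eq_top N.toTwoSidedIdeal).imp (fun h => ?_) (fun h => ?_)
  · exact (Submodule.eq_bot_iff N).mpr fun x hx => by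
      simpa [h] using (hmem x).mpr hx
  · exact eq_top_iff.mpr fun x _ => (hmem x).mp (h ▸ trivial)

theorem Module.End.exists_eq_algebraMap_mul_of_tensorProduct_mop
    (hcen : Subring.center S = (algebraMap Q S).range) (g : Module.End (S ⊗[Q] Sᵐᵒᵖ) S) :
    ∃ c : Q, ∀ x, g x = algebraMap Q S c * x := by
  have hleft (x : S) : g x = x * g 1 := by
    simpa [TensorProduct.tmul_smul_eq_mul_mul] using g.map_smul (x ⊗ₜ op 1) 1
  have hright (x : S) : g x = g 1 * x := by
    simpa [TensorProduct.tmul_smul_eq_mul_mul] using g.map_smul (1 ⊗ₜ op x) 1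
  have hc : g 1 ∈ Subring.center S :=
    Subring.mem_center_iff.mpr fun x => by rw [← hleft, hright]
  rw [hcen] at hc
  obtain ⟨c, hc⟩ := hc
  exact ⟨c, fun x => by rw [hright, hc]⟩

theorem AlgHom.mulLeftRight_surjective [FiniteDimensional Q S] [IsSimpleRing S]
    (hcen : Subring.center S = (algebraMap Q S).range) :
    Function.Surjective (AlgHom.mulLeftRight Q S) := by
  classical
  intro φ
  have := isSimpleModule_tensorProduct_mop (Q := Q) (S := S)
  let f : Module.End (Module.End (S ⊗[Q] Sᵐᵒᵖ) S) S :=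
    { toFun := φ
      map_add' := φ.map_add
      map_smul' := fun g x => by
        obtain ⟨c, hc⟩ := g.exists_eq_algebraMap_mul_of_tensorProduct_mop hcen
        simp only [Module.End.smul_def, hc, ← Algebra.smul_def, map_smul, RingHom.id_apply] }
  let bas := Module.finBasis Q S
  obtain ⟨r, hr⟩ := jacobson_density f (Finset.univ.image bas)
  exact ⟨r, bas.ext fun i => (hr _ (Finset.mem_image_of_mem _ (Finset.mem_univ i))).symm⟩

end Bimodule

theorem Matrix.smul_mem_of_mul_single_mem {K A n : Type*} [CommRing K] [Ring A] [Algebra K A]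
    [Fintype n] [DecidableEq n] (e : A ≃ₐ[K] Matrix n n K) (M : Subring A) {X u v : A} {j k : n}
    (hu : ∀ i, X * e.symm (single i j 1) * u ∈ M)
    (hv : ∀ i, v * e.symm (single k i 1) ∈ M) :
    e (u * v) j k • X ∈ M := by
  set w := e (u * v)
  have hunits : ∑ i, single i j (1 : K) * w * single k i 1 = w j k • 1 := by
    simp_rw [single_mul_mul_single, one_mul, mul_one, ← sum_single_one, Finset.smul_sum,
      smul_single, smul_eq_mul, mul_one]
  have hsum :
      w j k • X = ∑ i, X * e.symm (single i j 1) * u * (v * e.symm (single k i 1)) := by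
    apply e.injective
    calc e (w j k • X) = e X * (w j k • 1) := by rw [map_smul, mul_smul_comm, mul_one]
      _ = e X * ∑ i, single i j (1 : K) * w * single k i 1 := by rw [hunits]
      _ = _ := by
        simp only [w, map_sum, map_mul, AlgEquiv.apply_symm_apply, Finset.mul_sum, mul_assoc]
  rw [hsum]
  exact M.sum_mem fun i _ => M.mul_mem (hu i) (hv i)

namespace IsOrderIn

variable {Q S : Type*} [Field Q] [Ring S] [Algebra Q S] {R : Subring S}

open LinearMap in
theorem exists_isUnit_mulLeftRight_mul_mem (hR : IsOrderIn R) (F : Finset (S × S)) :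
    ∃ u v : Module.End Q S, IsUnit u ∧ IsUnit v ∧
      ∀ p ∈ F, mulLeftRight Q p * u ∈ R.endStabilizer Q ∧
        v * mulLeftRight Q p ∈ R.endStabilizer Q := by
  classical
  obtain ⟨b, hb, hbF⟩ := hR.exists_common_right_denom (F.image Prod.fst)
  obtain ⟨c, hc, hcF⟩ := hR.exists_common_left_denom (F.image Prod.snd)
  obtain ⟨b', hb', hb'F⟩ := hR.exists_common_left_denom (F.image Prod.fst)
  obtain ⟨c', hc', hc'F⟩ := hR.exists_common_right_denom (F.image Prod.snd)
  refine ⟨_, _, isUnit_mulLeftRight b c, isUnit_mulLeftRight b' c', fun p hp => ?_⟩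
  have h₁ := Finset.mem_image_of_mem Prod.fst hp
  have h₂ := Finset.mem_image_of_mem Prod.snd hp
  rw [mulLeftRight_mul, mulLeftRight_mul]
  exact ⟨Subring.mulLeftRight_mem_endStabilizer (hbF _ h₁) (hcF _ h₂),
    Subring.mulLeftRight_mem_endStabilizer (hb'F _ h₁) (hc'F _ h₂)⟩

theorem exists_isUnit_mul_mem_endStabilizer [FiniteDimensional Q S] [IsSimpleRing S]
    (hcen : Subring.center S = (algebraMap Q S).range) (hR : IsOrderIn R)
    (F : Finset (Module.End Q S)) :
    ∃ u v : Module.End Q S, IsUnit u ∧ IsUnit v ∧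
      ∀ φ ∈ F, φ * u ∈ R.endStabilizer Q ∧ v * φ ∈ R.endStabilizer Q := by
  classical
  choose t ht using AlgHom.mulLeftRight_surjective hcen (Q := Q) (S := S)
  choose T hT using fun φ => TensorProduct.exists_finset (t φ)
  have hφ (φ : Module.End Q S) :
      φ = ∑ p ∈ T φ, LinearMap.mulLeftRight Q (p.1, p.2.unop) := by
    have := ht φ
    rw [hT φ, map_sum] at this
    simpa only [AlgHom.mulLeftRight_tmul] using this.symm
  obtain ⟨u, v, hu, hv, huv⟩ := hR.exists_isUnit_mulLeftRight_mul_mem (Q := Q)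
    (F.biUnion fun φ => (T φ).image fun p => (p.1, p.2.unop))
  refine ⟨u, v, hu, hv, fun φ hφF => ?_⟩
  have hmem (p) (hp : p ∈ T φ) := huv (p.1, p.2.unop)
    (Finset.mem_biUnion.mpr ⟨φ, hφF, Finset.mem_image_of_mem _ hp⟩)
  rw [hφ φ, Finset.sum_mul, Finset.mul_sum]
  exact ⟨Subring.sum_mem _ fun p hp => (hmem p hp).1,
    Subring.sum_mem _ fun p hp => (hmem p hp).2⟩

theorem exists_smul_mem_endStabilizer [FiniteDimensional Q S] [IsSimpleRing S]
    (hcen : Subring.center S = (algebraMap Q S).range) (hR : IsOrderIn R) (X : Module.End Q S) :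
    ∃ c : Q, c ≠ 0 ∧ c • (1 : Module.End Q S) ∈ R.endStabilizer Q ∧
      c • X ∈ R.endStabilizer Q := by
  classical
  let bas := Module.finBasis Q S
  let e := LinearMap.toMatrixAlgEquiv bas
  let E (i j) : Module.End Q S := e.symm (Matrix.single i j 1)
  let matrixUnits := (Finset.univ : Finset (_ × _)).image fun p => E p.1 p.2
  obtain ⟨u, v, hu, hv, huv⟩ := hR.exists_isUnit_mul_mem_endStabilizer hcen
    (matrixUnits ∪ matrixUnits.image (X * ·))
  have hE (i j) : E i j ∈ matrixUnits := Finset.mem_image.mpr ⟨(i, j), Finset.mem_univ _, rfl⟩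
  have hne : e (u * v) ≠ 0 := (map_ne_zero_iff e e.injective).mpr (hu.mul hv).ne_zero
  obtain ⟨j, k, hjk⟩ : ∃ j k, e (u * v) j k ≠ 0 := by
    by_contra! h
    exact hne (Matrix.ext h)
  refine ⟨_, hjk, Matrix.smul_mem_of_mul_single_mem e _ (fun i => ?_) (fun i => ?_),
    Matrix.smul_mem_of_mul_single_mem e _ (fun i => ?_) (fun i => ?_)⟩
  · rw [one_mul]
    exact (huv _ (Finset.mem_union_left _ (hE i j))).1
  · exact (huv _ (Finset.mem_union_left _ (hE k i))).2
  · exact (huv _ (Finset.mem_union_right _ (Finset.mem_image_of_mem _ (hE i j)))).1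
  · exact (huv _ (Finset.mem_union_left _ (hE k i))).2

theorem exists_algebraMap_mul_mem [FiniteDimensional Q S] [IsSimpleRing S]
    (hcen : Subring.center S = (algebraMap Q S).range) (hR : IsOrderIn R) (s : S) :
    ∃ z : Q, z ≠ 0 ∧ algebraMap Q S z ∈ R ∧ algebraMap Q S z * s ∈ R := by
  obtain ⟨z, hz, h₁, hs⟩ := hR.exists_smul_mem_endStabilizer hcen (LinearMap.mulLeft Q s)
  refine ⟨z, hz, ?_, ?_⟩
  · simpa [Algebra.algebraMap_eq_smul_one] using h₁ 1 R.one_mem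
  · simpa [Algebra.smul_def] using hs 1 R.one_mem

end IsOrderIn

theorem orderEquivIn_of_le_of_mul_mem {S : Type*} [Ring S] {R R' : Subring S} {z : S}
    (hz : IsUnit z) (hle : R ≤ R') (hR'z : ∀ x ∈ R', x * z ∈ R) : OrderEquivIn R R' :=
  ⟨⟨1, 1, fun r hr => by simpa using hle hr⟩,
    ⟨1, hz.unit, fun r hr => by simpa using hR'z r hr⟩⟩

theorem IsOrderIn.exists_algebraMap_mul_mem_of_orderEquivIn {Q S : Type*} [Field Q] [Ring S]
    [Algebra Q S] [FiniteDimensional Q S] [IsSimpleRing S]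
    (hcen : Subring.center S = (algebraMap Q S).range) {R R' : Subring S} (hR : IsOrderIn R)
    (h : OrderEquivIn R R') :
    ∃ z : Q, z ≠ 0 ∧ algebraMap Q S z ∈ R ∧ ∀ x ∈ R', x * algebraMap Q S z ∈ R := by
  obtain ⟨-, a, b, hab⟩ := h
  obtain ⟨z₁, hz₁, hz₁R, ha⟩ := hR.exists_algebraMap_mul_mem hcen ↑a⁻¹
  obtain ⟨z₂, hz₂, hz₂R, hb⟩ := hR.exists_algebraMap_mul_mem hcen ↑b⁻¹
  refine ⟨z₁ * z₂, mul_ne_zero hz₁ hz₂, by rw [map_mul]; exact R.mul_mem hz₁R hz₂R,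
    fun x hx => ?_⟩
  have hxz : x * algebraMap Q S (z₁ * z₂) =
      algebraMap Q S z₁ * ↑a⁻¹ * (a * x * b) * (algebraMap Q S z₂ * ↑b⁻¹) := calc
    _ = algebraMap Q S z₁ * x * algebraMap Q S z₂ := by
      rw [map_mul, ← mul_assoc, Algebra.commutes]
    _ = algebraMap Q S z₁ * ↑a⁻¹ * (a * x * b) * (↑b⁻¹ * algebraMap Q S z₂) := by
      simp [mul_assoc]
    _ = _ := by rw [Algebra.commutes z₂]
  rw [hxz]
  exact R.mul_mem (R.mul_mem ha (hab x hx)) hb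

/-- An order `R` in a central simple algebra `S` is a maximal
order iff for every nonzero `z ∈ Z(R)` and every ring `R'` with
`R ⊆ R' ⊆ (1/z)R = {x : x z ∈ R}`, one has `R' = R`. -/
theorem statement3 {Q S : Type*} [Field Q] [Ring S] [Algebra Q S]
    [FiniteDimensional Q S] [IsSimpleRing S]
    (hcen : Subring.center S = (algebraMap Q S).range)
    (R : Subring S) (hR : IsOrderIn R) :
    IsMaximalOrderIn R ↔
      ∀ z : S, z ∈ R → (∀ r ∈ R, z * r = r * z) → z ≠ 0 →
        ∀ R' : Subring S, R ≤ R' → (∀ x ∈ R', x * z ∈ R) → R' = R := by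
  constructor
  · rintro ⟨-, hmax⟩ z - hzcomm hz R' hle hR'z
    obtain ⟨μ, rfl⟩ : z ∈ (algebraMap Q S).range := hcen ▸ hR.mem_center_of_commute hzcomm
    have hμ : μ ≠ 0 := by rintro rfl; exact hz (map_zero _)
    exact hmax R' (hR.mono hle)
      (orderEquivIn_of_le_of_mul_mem ((IsUnit.mk0 μ hμ).map _) hle hR'z) hle
  · refine fun H => ⟨hR, fun R' _ hequiv hle => ?_⟩
    obtain ⟨z, hz, hzR, hR'z⟩ := hR.exists_algebraMap_mul_mem_of_orderEquivIn hcen hequiv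
    exact H _ hzR (fun r _ => Algebra.commutes z r) ((map_ne_zero _).mpr hz) R' hle hR'z
end

section
/- A submonoid Φ of Z^N is integrally convex (i.e., f, g ∈ Φ implies every point of the group Φ−Φ lying in the segment [f,g] lies in Φ) if and only if it satisfies the weaker condition: for every f ∈ Φ−Φ, if kf ∈ Φ for some positive integer k, then f ∈ Φ. -/
/-!
If `k • h ∈ Φ`, then `h` lies on the segment `[0, k • h]`. Conversely, an integer point
`h = f + θ • (g - f)` of the segment between integer points `f ≠ g` has rational parameter
`θ = p / (p + r)`, read off from a coordinate where `f` and `g` differ; hence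
`(p + r) • h = r • f + p • g`, which lies in the monoid `Φ`.
-/

/-- The canonical embedding `ℤ^N ↪ ℝ^N`. -/
def toReal {N : ℕ} (f : Fin N → ℤ) : Fin N → ℝ := fun i => (f i : ℝ)

lemma mem_segment_zero_nsmul {E : Type*} [AddCommGroup E] [Module ℝ E] (x : E) {k : ℕ}
    (hk : 0 < k) : x ∈ segment ℝ 0 (k • x) := by
  rw [segment_eq_image']
  refine ⟨(k : ℝ)⁻¹, ⟨by positivity, inv_le_one_of_one_le₀ (by exact_mod_cast hk)⟩, ?_⟩
  dsimp only
  rw [zero_add, sub_zero, ← Nat.cast_smul_eq_nsmul ℝ, smul_smul,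
    inv_mul_cancel₀ (by positivity), one_smul]

lemma exists_nat_mul_add_eq_of_mul_intCast_eq {b : ℝ} (hb₀ : 0 ≤ b) (hb₁ : b ≤ 1) {d n : ℤ}
    (hd : d ≠ 0) (h : b * d = n) : ∃ p r : ℕ, 0 < p + r ∧ b * (p + r) = p := by
  have habs : b * d.natAbs = n.natAbs := by
    simp only [Nat.cast_natAbs, Int.cast_abs]
    rw [← abs_of_nonneg hb₀, ← abs_mul, h]
  have hle : n.natAbs ≤ d.natAbs := by
    exact_mod_cast habs ▸ mul_le_of_le_one_left (Nat.cast_nonneg _) hb₁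
  refine ⟨n.natAbs, d.natAbs - n.natAbs, ?_, ?_⟩
  · rw [Nat.add_sub_cancel' hle]
    exact Int.natAbs_pos.mpr hd
  · rw [← Nat.cast_add, Nat.add_sub_cancel' hle, habs]

lemma exists_add_nsmul_eq_of_mem_segment {ι : Type*} {f g h : ι → ℤ}
    (hh : (fun i ↦ (h i : ℝ)) ∈ segment ℝ (fun i ↦ (f i : ℝ)) (fun i ↦ (g i : ℝ))) :
    ∃ p r : ℕ, 0 < p + r ∧ (p + r) • h = r • f + p • g := by
  rw [segment_eq_image'] at hh
  obtain ⟨b, ⟨hb₀, hb₁⟩, hfgh⟩ := hh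
  have hcoord (j : ι) : (h j : ℝ) - f j = b * (g j - f j) := by
    have := congrFun hfgh j
    simp only [Pi.add_apply, Pi.smul_apply, Pi.sub_apply, smul_eq_mul] at this
    linarith
  obtain ⟨p, r, hpos, hbpr⟩ : ∃ p r : ℕ, 0 < p + r ∧
      ∀ j, b * (p + r) * ((g j : ℝ) - f j) = p * (g j - f j) := by
    by_cases hfg : f = g
    · exact ⟨0, 1, one_pos, fun j ↦ by simp [hfg]⟩
    obtain ⟨i, hi⟩ := Function.ne_iff.mp hfg
    obtain ⟨p, r, hpos, hbpr⟩ := exists_nat_mul_add_eq_of_mul_intCast_eq (n := h i - f i) hb₀ hb₁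
      (sub_ne_zero.mpr (Ne.symm hi)) (by push_cast; exact (hcoord i).symm)
    exact ⟨p, r, hpos, fun j ↦ by rw [hbpr]⟩
  refine ⟨p, r, hpos, funext fun j ↦ ?_⟩
  have hreal : ((p : ℝ) + r) * h j = r * f j + p * g j := by
    linear_combination (↑p + ↑r) * hcoord j + hbpr j
  simp only [Pi.add_apply, Pi.smul_apply, nsmul_eq_mul]
  exact_mod_cast hreal

/-- A submonoid `Φ` of `ℤ^N` is integrally convex (i.e. for
`f, g ∈ Φ` every point of `Φ − Φ` lying on the real segment `[f, g]` lies in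
`Φ`) if and only if it satisfies the weaker condition: for every `h ∈ Φ − Φ`,
if `k h ∈ Φ` for some positive integer `k`, then `h ∈ Φ`. -/
theorem statement15 {N : ℕ} (Φ : Set (Fin N → ℤ))
    (h0 : (0 : Fin N → ℤ) ∈ Φ)
    (hadd : ∀ f ∈ Φ, ∀ g ∈ Φ, f + g ∈ Φ) :
    (∀ f ∈ Φ, ∀ g ∈ Φ, ∀ h : Fin N → ℤ,
        (∃ α ∈ Φ, ∃ β ∈ Φ, h = α - β) →
        toReal h ∈ segment ℝ (toReal f) (toReal g) → h ∈ Φ) ↔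
    (∀ h : Fin N → ℤ, (∃ α ∈ Φ, ∃ β ∈ Φ, h = α - β) →
        ∀ k : ℕ, 0 < k → k • h ∈ Φ → h ∈ Φ) := by
  let S : AddSubmonoid (Fin N → ℤ) := ⟨⟨Φ, fun {f g} hf hg ↦ hadd f hf g hg⟩, h0⟩
  constructor
  · intro hconv h hdiff k hk hkh
    refine hconv 0 h0 (k • h) hkh h hdiff ?_
    have hzero : toReal (0 : Fin N → ℤ) = 0 := funext fun _ ↦ Int.cast_zero
    have hsmul : toReal (k • h) = k • toReal h := funext fun _ ↦ by simp [toReal]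
    rw [hzero, hsmul]
    exact mem_segment_zero_nsmul _ hk
  · intro hdiv f hf g hg h hdiff hseg
    obtain ⟨p, r, hpos, hpr⟩ := exists_add_nsmul_eq_of_mem_segment hseg
    refine hdiv h hdiff (p + r) hpos ?_
    rw [hpr]
    exact S.add_mem (S.nsmul_mem hf r) (S.nsmul_mem hg p)
end

section
/- For two nonzero elements b_1, b_2 of a quantum torus T_ε(Λ) over an integral domain, the Newton polytope of the product satisfies Newt(b_1 b_2) = Newt(b_1) + Newt(b_2) (Minkowski sum). -/
/-!
A vertex of `Newt(x) + Newt(y)` is a sum `f + g` of exponents `f ∈ supp x`, `g ∈ supp y` in only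
one way, so the coefficient of `X^(f+g)` in `x * y` is the single product `c_f d_g ε^…`, which is
nonzero over a domain. Hence all vertices of the Minkowski sum lie in `supp (x * y)`, which is
itself contained in `supp x + supp y`, and Krein–Milman gives equality of the convex hulls.
-/

open scoped Pointwise

/-- The Newton polytope of a nonzero element of the quantum torus: the convex
hull in `ℝ^N` of the (finite) support of its expansion in the basis `{X^f}`. -/
noncomputable def newtonPolytope {A T : Type*} [CommRing A] [Ring T] [Algebra A T]
    {N : ℕ} (b : Module.Basis (Fin N → ℤ) A T) (x : T) : Set (Fin N → ℝ) :=
  convexHull ℝ (toReal '' ↑(b.repr x).support)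

namespace Module.Basis

variable {M A T : Type*} [AddCommMonoid M] [CommSemiring A] [Semiring T] [Algebra A T]
  (b : Basis M A T) {w : M → M → A}

theorem repr_mul_eq_sum_single (hmul : ∀ f g, b f * b g = w f g • b (f + g)) (x y : T) :
    b.repr (x * y) = ∑ f ∈ (b.repr x).support, ∑ g ∈ (b.repr y).support,
      Finsupp.single (f + g) (b.repr x f * b.repr y g * w f g) := by
  conv_lhs => rw [← b.linearCombination_repr x, ← b.linearCombination_repr y]
  simp only [Finsupp.linearCombination_apply, Finsupp.sum, Finset.sum_mul_sum, map_sum,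
    smul_mul_smul_comm, hmul, smul_smul, map_smul, b.repr_self, Finsupp.smul_single_one]

theorem support_repr_mul_subset (hmul : ∀ f g, b f * b g = w f g • b (f + g)) (x y : T) :
    ((b.repr (x * y)).support : Set M) ⊆ ↑(b.repr x).support + ↑(b.repr y).support := by
  classical
  rw [b.repr_mul_eq_sum_single hmul]
  intro h hh
  obtain ⟨f, hf, hh⟩ := Finset.mem_biUnion.1 (Finsupp.support_finsetSum hh)
  obtain ⟨g, hg, hh⟩ := Finset.mem_biUnion.1 (Finsupp.support_finsetSum hh)
  exact ⟨f, hf, g, hg, (Finset.mem_singleton.1 (Finsupp.support_single_subset hh)).symm⟩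

theorem repr_mul_apply_add_of_unique (hmul : ∀ f g, b f * b g = w f g • b (f + g)) {x y : T}
    {f g : M} (hf : f ∈ (b.repr x).support) (hg : g ∈ (b.repr y).support)
    (huniq : ∀ f' ∈ (b.repr x).support, ∀ g' ∈ (b.repr y).support,
      f' + g' = f + g → f' = f ∧ g' = g) :
    b.repr (x * y) (f + g) = b.repr x f * b.repr y g * w f g := by
  rw [b.repr_mul_eq_sum_single hmul, ← Finset.sum_product', Finsupp.finsetSum_apply,
    Finset.sum_eq_single_of_mem (f, g) (Finset.mem_product.2 ⟨hf, hg⟩)]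
  · exact Finsupp.single_eq_same
  · rintro ⟨f', g'⟩ hfg' hne
    obtain ⟨hf', hg'⟩ := Finset.mem_product.1 hfg'
    refine Finsupp.single_eq_of_ne fun h => hne ?_
    obtain ⟨rfl, rfl⟩ := huniq f' hf' g' hg' h.symm
    rfl

end Module.Basis

section Convex

variable {E : Type*} [AddCommGroup E] [Module ℝ E]

theorem eq_and_eq_of_add_eq_of_mem_extremePoints_add {P Q : Set E} {e p p' q q' : E}
    (he : e ∈ (P + Q).extremePoints ℝ) (hp : p ∈ P) (hp' : p' ∈ P) (hq : q ∈ Q) (hq' : q' ∈ Q)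
    (hpq : p + q = e) (hpq' : p' + q' = e) : p' = p ∧ q' = q := by
  -- `e` is the midpoint of `p + q'` and `p' + q`, so both equal `e`.
  have hmid : e ∈ openSegment ℝ (p + q') (p' + q) := by
    convert midpoint_mem_openSegment (𝕜 := ℝ) (p + q') (p' + q) using 1
    rw [midpoint_eq_smul_add, show p + q' + (p' + q) = (2 : ℝ) • e by
      linear_combination (norm := module) hpq + hpq']
    simp
  have hq'q : q' = q :=
    add_left_cancel ((he.2 (Set.add_mem_add hp hq') (Set.add_mem_add hp' hq) hmid).trans hpq.symm)
  subst hq'q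
  exact ⟨add_right_cancel (hpq'.trans hpq.symm), rfl⟩

theorem exists_unique_add_of_mem_extremePoints_convexHull_add {S U : Set E} {e : E}
    (he : e ∈ (convexHull ℝ (S + U)).extremePoints ℝ) :
    ∃ s ∈ S, ∃ u ∈ U, s + u = e ∧ ∀ s' ∈ S, ∀ u' ∈ U, s' + u' = e → s' = s ∧ u' = u := by
  obtain ⟨s, hs, u, hu, rfl⟩ := extremePoints_convexHull_subset he
  rw [convexHull_add] at he
  exact ⟨s, hs, u, hu, rfl, fun s' hs' u' hu' h => eq_and_eq_of_add_eq_of_mem_extremePoints_add he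
    (subset_convexHull ℝ S hs) (subset_convexHull ℝ S hs') (subset_convexHull ℝ U hu)
    (subset_convexHull ℝ U hu') rfl h⟩

theorem convexHull_eq_of_extremePoints_subset [TopologicalSpace E] [T2Space E]
    [IsTopologicalAddGroup E] [ContinuousSMul ℝ E] [LocallyConvexSpace ℝ E] {V W : Set E}
    (hV : V.Finite) (hWV : W ⊆ V)
    (hext : (convexHull ℝ V).extremePoints ℝ ⊆ W) : convexHull ℝ W = convexHull ℝ V := by
  refine (convexHull_mono hWV).antisymm ?_
  rw [← closure_convexHull_extremePoints (hV.isCompact_convexHull (𝕜 := ℝ)) (convex_convexHull ℝ V)]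
  exact closure_minimal
    (convexHull_min (hext.trans (subset_convexHull ℝ W)) (convex_convexHull ℝ W))
    ((hV.subset hWV).isCompact_convexHull (𝕜 := ℝ)).isClosed

end Convex

section toReal

variable {N : ℕ}

theorem toReal_add (f g : Fin N → ℤ) : toReal (f + g) = toReal f + toReal g :=
  funext fun i => Int.cast_add (f i) (g i)

theorem toReal_injective : Function.Injective (toReal (N := N)) :=
  fun _ _ h => funext fun i => Int.cast_injective (congrFun h i)

theorem image_toReal_add (s t : Set (Fin N → ℤ)) : toReal '' (s + t) = toReal '' s + toReal '' t :=
  Set.image_image2_distrib toReal_add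

theorem exists_unique_add_of_mem_extremePoints_convexHull_image_toReal {s t : Set (Fin N → ℤ)}
    {e : Fin N → ℝ} (he : e ∈ (convexHull ℝ (toReal '' (s + t))).extremePoints ℝ) :
    ∃ f ∈ s, ∃ g ∈ t, toReal (f + g) = e ∧
      ∀ f' ∈ s, ∀ g' ∈ t, f' + g' = f + g → f' = f ∧ g' = g := by
  rw [image_toReal_add] at he
  obtain ⟨_, ⟨f, hf, rfl⟩, _, ⟨g, hg, rfl⟩, hfg, huniq⟩ :=
    exists_unique_add_of_mem_extremePoints_convexHull_add he
  refine ⟨f, hf, g, hg, (toReal_add f g).trans hfg, fun f' hf' g' hg' h => ?_⟩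
  obtain ⟨h₁, h₂⟩ :=
    huniq _ ⟨f', hf', rfl⟩ _ ⟨g', hg', rfl⟩ (by rw [← toReal_add, h, toReal_add, hfg])
  exact ⟨toReal_injective h₁, toReal_injective h₂⟩

end toReal

theorem statement16_general {A : Type*} [CommRing A] [IsDomain A]
    {N ℓ : ℕ} (hℓ : 0 < ℓ) (u : A) (hu : IsPrimitiveRoot u ℓ)
    (Λ : (Fin N → ℤ) →ₗ[ℤ] (Fin N → ℤ) →ₗ[ℤ] ZMod ℓ)
    {T : Type*} [Ring T] [Algebra A T]
    (b : Module.Basis (Fin N → ℤ) A T)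
    (hmul : ∀ f g : Fin N → ℤ, b f * b g = u ^ (Λ f g).val • b (f + g)) :
    ∀ x y : T, x ≠ 0 → y ≠ 0 →
      newtonPolytope b (x * y) = newtonPolytope b x + newtonPolytope b y := by
  intro x y _ _
  rw [newtonPolytope, newtonPolytope, newtonPolytope, ← convexHull_add, ← image_toReal_add]
  refine convexHull_eq_of_extremePoints_subset
    ((((b.repr x).support.finite_toSet).add (b.repr y).support.finite_toSet).image toReal)
    (Set.image_mono (b.support_repr_mul_subset hmul x y)) fun e he => ?_
  obtain ⟨f, hf, g, hg, rfl, huniq⟩ :=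
    exists_unique_add_of_mem_extremePoints_convexHull_image_toReal he
  refine Set.mem_image_of_mem toReal (Finsupp.mem_support_iff.2 ?_)
  rw [b.repr_mul_apply_add_of_unique hmul hf hg huniq]
  exact mul_ne_zero (mul_ne_zero (Finsupp.mem_support_iff.1 hf) (Finsupp.mem_support_iff.1 hg))
    ((hu.isUnit hℓ.ne').pow _).ne_zero

/-- For nonzero elements `b₁, b₂` of a quantum torus over an
integral domain, `Newt(b₁ b₂) = Newt(b₁) + Newt(b₂)` (Minkowski sum). -/
theorem statement16 {A : Type*} [CommRing A] [IsDomain A]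
    {N ℓ : ℕ} (hℓ : 0 < ℓ) (u : A) (hu : IsPrimitiveRoot u ℓ)
    (Λ : (Fin N → ℤ) →ₗ[ℤ] (Fin N → ℤ) →ₗ[ℤ] ZMod ℓ)
    (hskew : ∀ f g : Fin N → ℤ, Λ f g = - Λ g f)
    {T : Type*} [Ring T] [Algebra A T]
    (b : Module.Basis (Fin N → ℤ) A T)
    (hone : b 0 = 1)
    (hmul : ∀ f g : Fin N → ℤ, b f * b g = u ^ (Λ f g).val • b (f + g)) :
    ∀ x y : T, x ≠ 0 → y ≠ 0 →
      newtonPolytope b (x * y) = newtonPolytope b x + newtonPolytope b y :=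
  statement16_general hℓ u hu Λ b hmul
end

section
/- Let ε be a primitive ℓ-th root of unity and consider the algebra R over A = k[ε^{1/2}] generated by x_1, x_2, y_1, y_2 subject to: x_2x_1 = ε^{-1}x_1x_2, y_2x_1 = ε x_1y_2, x_2y_1 = ε y_1x_2, x_1y_1 = 1 + ε^{1/2}x_2, y_1x_1 = 1 + ε^{-1/2}x_2, x_2y_2 = 1 + ε^{-1/2}x_1, y_2x_2 = 1 + ε^{1/2}x_1, y_2y_1 = ε^{-1}y_1y_2 + (1 − ε^{-1}). Then R is spanned over A by the monomials y_1^{m_1} x_1^{n_1} x_2^{n_2} y_2^{m_2} with m_1, n_1, n_2, m_2 ∈ N and min(m_1,n_1) = min(m_2,n_2) = 0. -/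
/-!
The A-span of the ordered monomials `y₁^a x₁^b x₂^c y₂^d` contains `1` and is stable under left
multiplication by each generator, hence is all of `R`: `x₂` and `y₂` pass to their slots up to
scalars, `x₁ y₁ = 1 + ε^{1/2} x₂` and `y₂ x₂ = 1 + ε^{1/2} x₁` remove a letter, and
`y₂ y₁ = ε⁻¹ y₁ y₂ + (1 - ε⁻¹)` lets `y₂` cross `y₁^a` by induction on `a`.
An ordered monomial with `a, b ≥ 1` (resp. `c, d ≥ 1`) is rewritten with
`y₁ x₁ = 1 + ε^{-1/2} x₂` (resp. `x₂ y₂ = 1 + ε^{-1/2} x₁`) as a combination of ordered monomials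
of smaller total degree, so induction on the degree lands in the span of those with
`min(a, b) = min(c, d) = 0`.
-/

open Submodule

section

variable {A R : Type*} [CommRing A] [Ring R] [Algebra A R]

section LeftMultiplication

variable {T : Set R}

theorem mul_mem_span_of_forall_mul_mem {g : R} (h : ∀ t ∈ T, g * t ∈ span A T) {m : R}
    (hm : m ∈ span A T) : g * m ∈ span A T :=
  (span_le (p := (span A T).comap (LinearMap.mulLeft A g))).mpr h hm

theorem span_eq_top_of_forall_mul_mem {s : Set R} (hs : Algebra.adjoin A s = ⊤)
    (h1 : 1 ∈ span A T) (h : ∀ g ∈ s, ∀ t ∈ T, g * t ∈ span A T) : span A T = ⊤ := by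
  have hmul : ∀ r ∈ Algebra.adjoin A s, ∀ m ∈ span A T, r * m ∈ span A T := by
    intro r hr
    induction hr using Algebra.adjoin_induction with
    | mem g hg => exact fun m => mul_mem_span_of_forall_mul_mem (h g hg)
    | algebraMap a =>
      intro m hm
      rw [Algebra.algebraMap_eq_smul_one, smul_mul_assoc, one_mul]
      exact smul_mem _ a hm
    | add u v _ _ hu hv => exact fun m hm => add_mul u v m ▸ add_mem (hu m hm) (hv m hm)
    | mul u v _ _ hu hv => exact fun m hm => (mul_assoc u v m).symm ▸ hu _ (hv m hm)
  refine eq_top_iff.mpr fun r _ => ?_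
  simpa using hmul r (hs ▸ Algebra.mem_top) 1 h1

end LeftMultiplication

section QCommutation

variable {a b : R} {q : A}

theorem mul_pow_eq_smul_of_mul_eq_smul (h : b * a = q • (a * b)) (n : ℕ) :
    b * a ^ n = q ^ n • (a ^ n * b) := by
  induction n with
  | zero => simp
  | succ n ih =>
    rw [pow_succ, ← mul_assoc, ih, smul_mul_assoc, mul_assoc, h, mul_smul_comm, smul_smul,
      ← mul_assoc, pow_succ]

theorem pow_mul_eq_smul_of_mul_eq_smul (h : b * a = q • (a * b)) (n : ℕ) :
    b ^ n * a = q ^ n • (a * b ^ n) := by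
  induction n with
  | zero => simp
  | succ n ih =>
    rw [pow_succ', mul_assoc, ih, mul_smul_comm, ← mul_assoc, h, smul_mul_assoc, smul_smul,
      mul_assoc, pow_succ]

end QCommutation

section Monomials

variable (x1 x2 y1 y2 : R)

def orderedMonomials : Set R :=
  {m | ∃ a b c d : ℕ, m = y1 ^ a * x1 ^ b * x2 ^ c * y2 ^ d}

def reducedMonomials : Set R :=
  {m | ∃ m1 n1 n2 m2 : ℕ, min m1 n1 = 0 ∧ min m2 n2 = 0 ∧
    m = y1 ^ m1 * x1 ^ n1 * x2 ^ n2 * y2 ^ m2}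

variable {x1 x2 y1 y2}

theorem monomial_mem_span_orderedMonomials (a b c d : ℕ) :
    y1 ^ a * x1 ^ b * x2 ^ c * y2 ^ d ∈ span A (orderedMonomials x1 x2 y1 y2) :=
  subset_span ⟨a, b, c, d, rfl⟩

theorem y1_mul_mem_span_orderedMonomials {t : R} (ht : t ∈ orderedMonomials x1 x2 y1 y2) :
    y1 * t ∈ span A (orderedMonomials x1 x2 y1 y2) := by
  obtain ⟨a, b, c, d, rfl⟩ := ht
  simpa only [pow_succ', mul_assoc] using monomial_mem_span_orderedMonomials (a + 1) b c d

theorem x2_mul_monomial {ε εi : A} (r1 : x2 * x1 = εi • (x1 * x2))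
    (r3 : x2 * y1 = ε • (y1 * x2)) (a b c d : ℕ) :
    x2 * (y1 ^ a * x1 ^ b * x2 ^ c * y2 ^ d) =
      (ε ^ a * εi ^ b) • (y1 ^ a * x1 ^ b * x2 ^ (c + 1) * y2 ^ d) := by
  calc x2 * (y1 ^ a * x1 ^ b * x2 ^ c * y2 ^ d)
      = (x2 * y1 ^ a) * x1 ^ b * x2 ^ c * y2 ^ d := by simp only [mul_assoc]
    _ = ε ^ a • (y1 ^ a * (x2 * x1 ^ b) * x2 ^ c * y2 ^ d) := by
      rw [mul_pow_eq_smul_of_mul_eq_smul r3]; simp only [smul_mul_assoc, mul_assoc]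
    _ = _ := by
      rw [mul_pow_eq_smul_of_mul_eq_smul r1]
      simp only [smul_mul_assoc, mul_smul_comm, smul_smul, mul_assoc, pow_succ']

theorem x2_mul_mem_span_orderedMonomials {ε εi : A} (r1 : x2 * x1 = εi • (x1 * x2))
    (r3 : x2 * y1 = ε • (y1 * x2)) {t : R} (ht : t ∈ orderedMonomials x1 x2 y1 y2) :
    x2 * t ∈ span A (orderedMonomials x1 x2 y1 y2) := by
  obtain ⟨a, b, c, d, rfl⟩ := ht
  rw [x2_mul_monomial r1 r3]
  exact smul_mem _ _ (monomial_mem_span_orderedMonomials _ _ _ _)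

theorem x1_mul_mem_span_orderedMonomials {s ε εi : A} (r1 : x2 * x1 = εi • (x1 * x2))
    (r3 : x2 * y1 = ε • (y1 * x2)) (r4 : x1 * y1 = 1 + s • x2) {t : R}
    (ht : t ∈ orderedMonomials x1 x2 y1 y2) :
    x1 * t ∈ span A (orderedMonomials x1 x2 y1 y2) := by
  obtain ⟨a | a, b, c, d, rfl⟩ := ht
  · convert monomial_mem_span_orderedMonomials 0 (b + 1) c d using 1
    simp only [pow_zero, one_mul, pow_succ', mul_assoc]
  · have h : x1 * (y1 ^ (a + 1) * x1 ^ b * x2 ^ c * y2 ^ d) =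
        y1 ^ a * x1 ^ b * x2 ^ c * y2 ^ d + s • (x2 * (y1 ^ a * x1 ^ b * x2 ^ c * y2 ^ d)) := by
      rw [pow_succ', mul_assoc y1, mul_assoc y1, mul_assoc y1, ← mul_assoc, r4]
      simp only [add_mul, one_mul, smul_mul_assoc, mul_assoc]
    rw [h]
    exact add_mem (monomial_mem_span_orderedMonomials _ _ _ _)
      (smul_mem _ _ (x2_mul_mem_span_orderedMonomials r1 r3 ⟨a, b, c, d, rfl⟩))

theorem y2_mul_x1_pow_mem_span_orderedMonomials {s ε : A} (r2 : y2 * x1 = ε • (x1 * y2))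
    (r7 : y2 * x2 = 1 + s • x1) (b c d : ℕ) :
    y2 * (x1 ^ b * x2 ^ c * y2 ^ d) ∈ span A (orderedMonomials x1 x2 y1 y2) := by
  rcases c with _ | c
  · have h : y2 * (x1 ^ b * x2 ^ 0 * y2 ^ d) = ε ^ b • (x1 ^ b * y2 ^ (d + 1)) := by
      rw [pow_zero, mul_one, ← mul_assoc, mul_pow_eq_smul_of_mul_eq_smul r2, smul_mul_assoc,
        mul_assoc, ← pow_succ']
    rw [h]
    exact smul_mem _ _ (subset_span ⟨0, b, 0, d + 1, by simp⟩)
  · have h : y2 * (x1 ^ b * x2 ^ (c + 1) * y2 ^ d) =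
        ε ^ b • (y1 ^ 0 * x1 ^ b * x2 ^ c * y2 ^ d) +
          (ε ^ b * s) • (y1 ^ 0 * x1 ^ (b + 1) * x2 ^ c * y2 ^ d) := by
      calc y2 * (x1 ^ b * x2 ^ (c + 1) * y2 ^ d)
          = (y2 * x1 ^ b) * (x2 * x2 ^ c * y2 ^ d) := by simp only [pow_succ', mul_assoc]
        _ = ε ^ b • (x1 ^ b * ((y2 * x2) * (x2 ^ c * y2 ^ d))) := by
          rw [mul_pow_eq_smul_of_mul_eq_smul r2]; simp only [smul_mul_assoc, mul_assoc]
        _ = _ := by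
          rw [r7]
          simp only [add_mul, one_mul, mul_add, smul_add, smul_mul_assoc, mul_smul_comm,
            smul_smul, mul_assoc, pow_zero, pow_succ]
    rw [h]
    exact add_mem (smul_mem _ _ (monomial_mem_span_orderedMonomials _ _ _ _))
      (smul_mem _ _ (monomial_mem_span_orderedMonomials _ _ _ _))

theorem y2_mul_mem_span_orderedMonomials {s ε εi : A} (r2 : y2 * x1 = ε • (x1 * y2))
    (r7 : y2 * x2 = 1 + s • x1) (r8 : y2 * y1 = εi • (y1 * y2) + (1 - εi) • (1 : R))
    {t : R} (ht : t ∈ orderedMonomials x1 x2 y1 y2) :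
    y2 * t ∈ span A (orderedMonomials x1 x2 y1 y2) := by
  obtain ⟨a, b, c, d, rfl⟩ := ht
  induction a with
  | zero => simpa using y2_mul_x1_pow_mem_span_orderedMonomials r2 r7 b c d
  | succ a ih =>
    have h : y2 * (y1 ^ (a + 1) * x1 ^ b * x2 ^ c * y2 ^ d) =
        εi • (y1 * (y2 * (y1 ^ a * x1 ^ b * x2 ^ c * y2 ^ d))) +
          (1 - εi) • (y1 ^ a * x1 ^ b * x2 ^ c * y2 ^ d) := by
      rw [pow_succ', mul_assoc y1, mul_assoc y1, mul_assoc y1, ← mul_assoc, r8]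
      simp only [add_mul, one_mul, smul_mul_assoc, mul_assoc]
    rw [h]
    exact add_mem (smul_mem _ _ (mul_mem_span_of_forall_mul_mem
        (fun _ => y1_mul_mem_span_orderedMonomials) ih))
      (smul_mem _ _ (monomial_mem_span_orderedMonomials _ _ _ _))

theorem span_orderedMonomials_eq_top {s ε εi : A}
    (hgen : Algebra.adjoin A {x1, x2, y1, y2} = ⊤)
    (r1 : x2 * x1 = εi • (x1 * x2)) (r2 : y2 * x1 = ε • (x1 * y2))
    (r3 : x2 * y1 = ε • (y1 * x2)) (r4 : x1 * y1 = 1 + s • x2) (r7 : y2 * x2 = 1 + s • x1)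
    (r8 : y2 * y1 = εi • (y1 * y2) + (1 - εi) • (1 : R)) :
    span A (orderedMonomials x1 x2 y1 y2) = ⊤ := by
  refine span_eq_top_of_forall_mul_mem hgen ?_ ?_
  · exact subset_span ⟨0, 0, 0, 0, by simp⟩
  · rintro g (rfl | rfl | rfl | rfl) t ht
    · exact x1_mul_mem_span_orderedMonomials r1 r3 r4 ht
    · exact x2_mul_mem_span_orderedMonomials r1 r3 ht
    · exact y1_mul_mem_span_orderedMonomials ht
    · exact y2_mul_mem_span_orderedMonomials r2 r7 r8 ht

theorem monomial_left_succ_succ {si εi : A} (r1 : x2 * x1 = εi • (x1 * x2))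
    (r5 : y1 * x1 = 1 + si • x2) (a b c d : ℕ) :
    y1 ^ (a + 1) * x1 ^ (b + 1) * x2 ^ c * y2 ^ d =
      y1 ^ a * x1 ^ b * x2 ^ c * y2 ^ d +
        (si * εi ^ b) • (y1 ^ a * x1 ^ b * x2 ^ (c + 1) * y2 ^ d) := by
  calc y1 ^ (a + 1) * x1 ^ (b + 1) * x2 ^ c * y2 ^ d
      = y1 ^ a * ((y1 * x1) * x1 ^ b) * x2 ^ c * y2 ^ d := by
        rw [pow_succ y1, pow_succ' x1]; simp only [mul_assoc]
    _ = y1 ^ a * x1 ^ b * x2 ^ c * y2 ^ d +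
          si • (y1 ^ a * (x2 * x1 ^ b) * x2 ^ c * y2 ^ d) := by
        rw [r5]; simp only [add_mul, one_mul, mul_add, smul_mul_assoc, mul_smul_comm]
    _ = _ := by
        rw [mul_pow_eq_smul_of_mul_eq_smul r1]
        simp only [smul_mul_assoc, mul_smul_comm, smul_smul, mul_assoc, pow_succ']

theorem monomial_right_succ_succ {si εi : A} (r1 : x2 * x1 = εi • (x1 * x2))
    (r6 : x2 * y2 = 1 + si • x1) (a b c d : ℕ) :
    y1 ^ a * x1 ^ b * x2 ^ (c + 1) * y2 ^ (d + 1) =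
      y1 ^ a * x1 ^ b * x2 ^ c * y2 ^ d +
        (si * εi ^ c) • (y1 ^ a * x1 ^ (b + 1) * x2 ^ c * y2 ^ d) := by
  calc y1 ^ a * x1 ^ b * x2 ^ (c + 1) * y2 ^ (d + 1)
      = y1 ^ a * x1 ^ b * (x2 ^ c * ((x2 * y2) * y2 ^ d)) := by
        rw [pow_succ x2, pow_succ' y2]; simp only [mul_assoc]
    _ = y1 ^ a * x1 ^ b * (x2 ^ c * y2 ^ d) +
          si • (y1 ^ a * x1 ^ b * ((x2 ^ c * x1) * y2 ^ d)) := by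
        rw [r6]; simp only [add_mul, one_mul, mul_add, smul_mul_assoc, mul_smul_comm, mul_assoc]
    _ = _ := by
        rw [pow_mul_eq_smul_of_mul_eq_smul r1]
        simp only [smul_mul_assoc, mul_smul_comm, smul_smul, mul_assoc, pow_succ]

theorem monomial_mem_span_reducedMonomials {si εi : A} (r1 : x2 * x1 = εi • (x1 * x2))
    (r5 : y1 * x1 = 1 + si • x2) (r6 : x2 * y2 = 1 + si • x1) (a b c d : ℕ) :
    y1 ^ a * x1 ^ b * x2 ^ c * y2 ^ d ∈ span A (reducedMonomials x1 x2 y1 y2) := by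
  induction hn : a + b + c + d using Nat.strong_induction_on generalizing a b c d with
  | _ n ih =>
  subst hn
  rcases Nat.eq_zero_or_pos (min a b) with hab | hab
  · rcases Nat.eq_zero_or_pos (min d c) with hdc | hdc
    · exact subset_span ⟨a, b, c, d, hab, hdc, rfl⟩
    obtain ⟨c, rfl⟩ := Nat.exists_eq_add_one_of_ne_zero (by omega : c ≠ 0)
    obtain ⟨d, rfl⟩ := Nat.exists_eq_add_one_of_ne_zero (by omega : d ≠ 0)
    rw [monomial_right_succ_succ r1 r6]
    exact add_mem (ih _ (by omega) _ _ _ _ rfl) (smul_mem _ _ (ih _ (by omega) _ _ _ _ rfl))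
  obtain ⟨a, rfl⟩ := Nat.exists_eq_add_one_of_ne_zero (by omega : a ≠ 0)
  obtain ⟨b, rfl⟩ := Nat.exists_eq_add_one_of_ne_zero (by omega : b ≠ 0)
  rw [monomial_left_succ_succ r1 r5]
  exact add_mem (ih _ (by omega) _ _ _ _ rfl) (smul_mem _ _ (ih _ (by omega) _ _ _ _ rfl))

end Monomials

end

theorem statement18_general {A : Type*} [CommRing A]
    (s si ε εi : A)
    {R : Type*} [Ring R] [Algebra A R]
    (x1 x2 y1 y2 : R)
    (hgen : Algebra.adjoin A {x1, x2, y1, y2} = ⊤)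
    (r1 : x2 * x1 = εi • (x1 * x2))
    (r2 : y2 * x1 = ε • (x1 * y2))
    (r3 : x2 * y1 = ε • (y1 * x2))
    (r4 : x1 * y1 = 1 + s • x2)
    (r5 : y1 * x1 = 1 + si • x2)
    (r6 : x2 * y2 = 1 + si • x1)
    (r7 : y2 * x2 = 1 + s • x1)
    (r8 : y2 * y1 = εi • (y1 * y2) + (1 - εi) • (1 : R)) :
    ∀ r : R, r ∈ Submodule.span A
      {m : R | ∃ m1 n1 n2 m2 : ℕ, min m1 n1 = 0 ∧ min m2 n2 = 0 ∧
        m = y1 ^ m1 * x1 ^ n1 * x2 ^ n2 * y2 ^ m2} := by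
  intro r
  have hle : span A (orderedMonomials x1 x2 y1 y2) ≤ span A (reducedMonomials x1 x2 y1 y2) :=
    span_le.mpr fun _ ⟨a, b, c, d, hm⟩ =>
      hm ▸ monomial_mem_span_reducedMonomials r1 r5 r6 a b c d
  exact hle (span_orderedMonomials_eq_top hgen r1 r2 r3 r4 r7 r8 ▸ mem_top)

/-- Let `ε^{1/2} = s` be a primitive `ℓ`-th root of unity,
`ε = s²`, and let `R` be an `A`-algebra (over `A = k[ε^{1/2}]`) generated by
`x₁, x₂, y₁, y₂` subject to the listed relations.  Then `R` is spanned over `A`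
by the monomials `y₁^{m₁} x₁^{n₁} x₂^{n₂} y₂^{m₂}` with
`min(m₁, n₁) = min(m₂, n₂) = 0`. -/
theorem statement18 {A : Type*} [CommRing A] [IsDomain A] [CharZero A]
    {ℓ : ℕ} (hℓ : 0 < ℓ)
    (s si ε εi : A) (hs : IsPrimitiveRoot s ℓ)
    (hε : ε = s ^ 2) (hsi : s * si = 1) (hεi : ε * εi = 1)
    {R : Type*} [Ring R] [Algebra A R]
    (x1 x2 y1 y2 : R)
    (hgen : Algebra.adjoin A {x1, x2, y1, y2} = ⊤)
    (r1 : x2 * x1 = εi • (x1 * x2))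
    (r2 : y2 * x1 = ε • (x1 * y2))
    (r3 : x2 * y1 = ε • (y1 * x2))
    (r4 : x1 * y1 = 1 + s • x2)
    (r5 : y1 * x1 = 1 + si • x2)
    (r6 : x2 * y2 = 1 + si • x1)
    (r7 : y2 * x2 = 1 + s • x1)
    (r8 : y2 * y1 = εi • (y1 * y2) + (1 - εi) • (1 : R)) :
    ∀ r : R, r ∈ Submodule.span A
      {m : R | ∃ m1 n1 n2 m2 : ℕ, min m1 n1 = 0 ∧ min m2 n2 = 0 ∧
        m = y1 ^ m1 * x1 ^ n1 * x2 ^ n2 * y2 ^ m2} :=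
  statement18_general s si ε εi x1 x2 y1 y2 hgen r1 r2 r3 r4 r5 r6 r7 r8
end
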